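/- arXiv:2102.01519 — 6 statements merged into one kernel-verified Lean document; each statement's English description precedes it below -/
import Mathlib

section
/- Let F be a nonempty finite type with q elements and let n ≥ 1. For every v : Fin n → F there exists c ∈ F with hammingDist v (constant vector c) ≤ ⌊n(q−1)/q⌋; moreover, there exists v : Fin n → F such that hammingDist v (constant vector c) ≥ ⌊n(q−1)/q⌋ for every c ∈ F. Hence the covering radius of the q-ary repetition code {constant vectors} ⊆ (Fin n → F) equals ⌊n(q−1)/q⌋. -/
/-!
Each coordinate of `v` disagrees with exactly `q - 1` of the `q` constant vectors, so the
distances from `v` to them sum to `n (q - 1)` and the nearest one is within the average,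
`⌊n (q - 1) / q⌋`. If all symbols occur in `v` equally often up to one (e.g. `v i = i mod q`),
these distances differ pairwise by at most one, and then even the smallest is at least
`⌊n (q - 1) / q⌋`.
-/

open Finset Fintype

section RepetitionCode

variable {ι F : Type*} [Fintype ι] [DecidableEq F]

lemma hammingDist_const_add_card_fiber (v : ι → F) (c : F) :
    hammingDist v (fun _ => c) + #{i | v i = c} = card ι := by
  rw [add_comm, hammingDist, card_filter_add_card_filter_not, card_univ]

variable [Fintype F]

lemma sum_hammingDist_const (v : ι → F) :
    ∑ c, hammingDist v (fun _ => c) = card ι * (card F - 1) := by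
  have hcard (i : ι) : #{c | v i ≠ c} = card F - 1 := by
    rw [filter_ne, card_erase_of_mem (mem_univ _), card_univ]
  calc ∑ c, hammingDist v (fun _ => c) = ∑ i, #{c | v i ≠ c} := by
        simp only [hammingDist, card_filter]; exact sum_comm
    _ = card ι * (card F - 1) := by simp [hcard]

lemma exists_hammingDist_const_le [Nonempty F] (v : ι → F) :
    ∃ c, hammingDist v (fun _ => c) ≤ card ι * (card F - 1) / card F := by
  have hsum : ∑ c, card F * hammingDist v (fun _ => c) ≤ ∑ _c : F, card ι * (card F - 1) := by
    simp [← mul_sum, sum_hammingDist_const]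
  obtain ⟨c, -, hc⟩ := exists_le_of_sum_le univ_nonempty hsum
  exact ⟨c, (Nat.le_div_iff_mul_le card_pos).2 (by linarith)⟩

lemma le_hammingDist_const_of_forall_le_add_one (v : ι → F)
    (hv : ∀ c c', hammingDist v (fun _ => c') ≤ hammingDist v (fun _ => c) + 1) (c : F) :
    card ι * (card F - 1) / card F ≤ hammingDist v (fun _ => c) := by
  set d := hammingDist v (fun _ => c)
  obtain ⟨p, hp⟩ : ∃ p, card F = p + 1 := Nat.exists_eq_add_one.2 (card_pos_iff.2 ⟨c⟩)
  have hsum : card ι * (card F - 1) + 1 ≤ card F * (d + 1) := by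
    rw [← sum_hammingDist_const v, ← add_sum_erase _ _ (mem_univ c)]
    calc d + ∑ c' ∈ univ.erase c, hammingDist v (fun _ => c') + 1
        ≤ d + ∑ _c' ∈ univ.erase c, (d + 1) + 1 := by gcongr with c'; exact hv c c'
      _ = card F * (d + 1) := by
        rw [sum_const, card_erase_of_mem (mem_univ c), card_univ, smul_eq_mul, hp,
          Nat.add_sub_cancel]
        ring
  exact Nat.lt_succ_iff.1 ((Nat.div_lt_iff_lt_mul (card_pos_iff.2 ⟨c⟩)).2 (by linarith))

lemma card_filter_fin_mod_eq (N : ℕ) {q : ℕ} (hq : 0 < q) (r : ℕ) :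
    #{k : Fin N | (k : ℕ) % q = r % q} = N / q + if r % q < N % q then 1 else 0 := by
  rw [← Nat.count_modEq_card N hq, Nat.count_eq_card_filter_range]
  refine card_bij (fun k _ => k) (fun k hk => ?_) (fun _ _ _ _ => Fin.ext) (fun x hx => ?_)
  · exact mem_filter.2 ⟨mem_range.2 k.isLt, (mem_filter.1 hk).2⟩
  · simp only [mem_filter, mem_range] at hx
    exact ⟨⟨x, hx.1⟩, by simpa [Nat.ModEq] using hx.2, rfl⟩

lemma exists_card_fiber_le_add_one [Nonempty F] :
    ∃ v : ι → F, ∀ c c', #{i | v i = c'} ≤ #{i | v i = c} + 1 := by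
  have hq : 0 < card F := card_pos
  let e := equivFin ι
  let eF := equivFin F
  refine ⟨fun i => eF.symm ⟨e i % card F, Nat.mod_lt _ hq⟩, ?_⟩
  have hfiber (c : F) : #{i | eF.symm ⟨e i % card F, Nat.mod_lt _ hq⟩ = c} =
      card ι / card F + if (eF c : ℕ) % card F < card ι % card F then 1 else 0 := by
    rw [← card_filter_fin_mod_eq (card ι) hq]
    refine card_equiv e fun i => ?_
    simp [Equiv.symm_apply_eq, Fin.ext_iff, Nat.mod_eq_of_lt (eF c).isLt]
  intro c c'
  rw [hfiber, hfiber]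
  split_ifs <;> omega

lemma exists_forall_le_hammingDist_const [Nonempty F] :
    ∃ v : ι → F, ∀ c, card ι * (card F - 1) / card F ≤ hammingDist v (fun _ => c) := by
  obtain ⟨v, hv⟩ := exists_card_fiber_le_add_one (ι := ι) (F := F)
  refine ⟨v, le_hammingDist_const_of_forall_le_add_one v fun c c' => ?_⟩
  linarith [hv c' c, hammingDist_const_add_card_fiber v c, hammingDist_const_add_card_fiber v c']

end RepetitionCode

lemma sSup_sInf_eq_of_forall_exists_le {α β : Type*} (D : α → β → ℕ) (R : ℕ)
    (hle : ∀ a, ∃ b, D a b ≤ R) (hge : ∃ a, ∀ b, R ≤ D a b) :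
    sSup {d | ∃ a, d = sInf {e | ∃ b, e = D a b}} = R := by
  have hinf_le (a : α) : sInf {e | ∃ b, e = D a b} ≤ R := by
    obtain ⟨b, hb⟩ := hle a
    exact le_trans (Nat.sInf_le ⟨b, rfl⟩) hb
  obtain ⟨a, ha⟩ := hge
  obtain ⟨b, -⟩ := hle a
  have hinf_eq : sInf {e | ∃ b, e = D a b} = R := by
    refine (hinf_le a).antisymm (le_csInf ⟨D a b, b, rfl⟩ ?_)
    rintro _ ⟨b', rfl⟩
    exact ha b'
  refine IsGreatest.csSup_eq ⟨⟨a, hinf_eq.symm⟩, ?_⟩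
  rintro _ ⟨a', rfl⟩
  exact hinf_le a'

theorem stmt8_general (F : Type) [Fintype F] [Nonempty F] [DecidableEq F] (n : ℕ) :
    (∀ v : Fin n → F, ∃ c : F,
      hammingDist v (fun _ => c) ≤ n * (Fintype.card F - 1) / Fintype.card F) ∧
    (∃ v : Fin n → F, ∀ c : F,
      n * (Fintype.card F - 1) / Fintype.card F ≤ hammingDist v (fun _ => c)) ∧
    sSup {d : ℕ | ∃ v : Fin n → F,
        d = sInf {e : ℕ | ∃ c : F, e = hammingDist v (fun _ => c)}} =
      n * (Fintype.card F - 1) / Fintype.card F := by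
  have hcover : ∀ v : Fin n → F, ∃ c : F,
      hammingDist v (fun _ => c) ≤ n * (card F - 1) / card F := by
    simpa only [Fintype.card_fin] using exists_hammingDist_const_le (ι := Fin n) (F := F)
  have hfar : ∃ v : Fin n → F, ∀ c : F,
      n * (card F - 1) / card F ≤ hammingDist v (fun _ => c) := by
    simpa only [Fintype.card_fin] using exists_forall_le_hammingDist_const (ι := Fin n) (F := F)
  exact ⟨hcover, hfar, sSup_sInf_eq_of_forall_exists_le _ _ hcover hfar⟩

/-- The covering radius of the `q`-ary repetition code of length `n ≥ 1`
over a finite alphabet `F` with `q` elements equals `⌊n(q−1)/q⌋`. -/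
theorem stmt8 (F : Type) [Fintype F] [Nonempty F] [DecidableEq F] (n : ℕ) (hn : 1 ≤ n) :
    (∀ v : Fin n → F, ∃ c : F,
      hammingDist v (fun _ => c) ≤ n * (Fintype.card F - 1) / Fintype.card F) ∧
    (∃ v : Fin n → F, ∀ c : F,
      n * (Fintype.card F - 1) / Fintype.card F ≤ hammingDist v (fun _ => c)) ∧
    sSup {d : ℕ | ∃ v : Fin n → F,
        d = sInf {e : ℕ | ∃ c : F, e = hammingDist v (fun _ => c)}} =
      n * (Fintype.card F - 1) / Fintype.card F :=
  stmt8_general F n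
end

section
/- Let H : Matrix (Fin 4) (Fin 9) (ZMod 2) be the matrix with rows (1,1,1,0,0,0,1,1,1), (0,0,0,1,1,1,1,1,1), (1,0,1,1,0,1,1,0,1), (0,1,1,0,1,1,0,1,1), and let C = {x : Fin 9 → ZMod 2 | H.mulVec x = 0}. Then for every v : Fin 9 → ZMod 2 there exists c ∈ C with hammingDist v c ≤ 2, and there exists v such that hammingDist v c ≥ 2 for every c ∈ C; hence the covering radius of C equals 2. Equivalently, every vector of (ZMod 2)^4 is a sum of at most 2 columns of H, and some vector of (ZMod 2)^4 is neither zero nor equal to a single column of H. -/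
set_option maxRecDepth 100000 in
private lemma stmt12_aux4 : ∀ y : Fin 4 → ZMod 2, ∃ s : Finset (Fin 9),
    s.card ≤ 2 ∧ y = ∑ j ∈ s, (fun i => (Matrix.of
      ![![1,1,1,0,0,0,1,1,1],
        ![0,0,0,1,1,1,1,1,1],
        ![1,0,1,1,0,1,1,0,1],
        ![0,1,1,0,1,1,0,1,1]] : Matrix (Fin 4) (Fin 9) (ZMod 2)) i j) := by decide

set_option maxRecDepth 100000 in
private lemma stmt12_aux2 : ∃ v : Fin 9 → ZMod 2, ∀ c : Fin 9 → ZMod 2,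
    (Matrix.of
      ![![1,1,1,0,0,0,1,1,1],
        ![0,0,0,1,1,1,1,1,1],
        ![1,0,1,1,0,1,1,0,1],
        ![0,1,1,0,1,1,0,1,1]] : Matrix (Fin 4) (Fin 9) (ZMod 2)).mulVec c = 0 →
    2 ≤ hammingDist v c := by decide

set_option maxRecDepth 100000 in
private lemma stmt12_aux5 : ∃ y : Fin 4 → ZMod 2, y ≠ 0 ∧ ∀ j : Fin 9,
    y ≠ fun i => (Matrix.of
      ![![1,1,1,0,0,0,1,1,1],
        ![0,0,0,1,1,1,1,1,1],
        ![1,0,1,1,0,1,1,0,1],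
        ![0,1,1,0,1,1,0,1,1]] : Matrix (Fin 4) (Fin 9) (ZMod 2)) i j := by decide

private lemma stmt12_mulVec_indicator {m n : ℕ} (M : Matrix (Fin m) (Fin n) (ZMod 2))
    (s : Finset (Fin n)) :
    M.mulVec (fun j => if j ∈ s then (1 : ZMod 2) else 0) = ∑ j ∈ s, (fun i => M i j) := by
  funext i
  simp [Matrix.mulVec, dotProduct, Finset.sum_apply, mul_ite, mul_one, mul_zero,
    Finset.sum_ite_mem]

private lemma stmt12_dist_add_indicator {n : ℕ} (v : Fin n → ZMod 2) (s : Finset (Fin n)) :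
    hammingDist v (v + fun j => if j ∈ s then (1 : ZMod 2) else 0) = s.card := by
  have h : ({i | v i ≠ (v + fun j => if j ∈ s then (1 : ZMod 2) else 0) i} : Finset (Fin n))
      = s := by
    ext j
    by_cases h : j ∈ s <;> simp [h, left_eq_add]
  rw [hammingDist, h]

private lemma stmt12_aux1 : ∀ v : Fin 9 → ZMod 2, ∃ c : Fin 9 → ZMod 2,
    (Matrix.of
      ![![1,1,1,0,0,0,1,1,1],
        ![0,0,0,1,1,1,1,1,1],
        ![1,0,1,1,0,1,1,0,1],
        ![0,1,1,0,1,1,0,1,1]] : Matrix (Fin 4) (Fin 9) (ZMod 2)).mulVec c = 0 ∧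
    hammingDist v c ≤ 2 := by
  intro v
  set M := (Matrix.of
      ![![1,1,1,0,0,0,1,1,1],
        ![0,0,0,1,1,1,1,1,1],
        ![1,0,1,1,0,1,1,0,1],
        ![0,1,1,0,1,1,0,1,1]] : Matrix (Fin 4) (Fin 9) (ZMod 2)) with hM
  obtain ⟨s, hs, hy⟩ := stmt12_aux4 (M.mulVec v)
  refine ⟨v + fun j => if j ∈ s then (1 : ZMod 2) else 0, ?_, ?_⟩
  · rw [Matrix.mulVec_add, stmt12_mulVec_indicator, ← hy]
    funext i
    exact CharTwo.add_self_eq_zero (M.mulVec v i)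
  · rw [stmt12_dist_add_indicator]
    exact hs

/-- The binary `[9,5]` code with the given `4 × 9` parity-check matrix `H`
has covering radius `2`: every vector is within Hamming distance `2` of a codeword, and some
vector is at distance at least `2` from every codeword. Equivalently, every vector of
`(ZMod 2)^4` is a sum of at most `2` columns of `H`, and some vector of `(ZMod 2)^4` is
neither zero nor a single column of `H`. -/
theorem stmt12 (H : Matrix (Fin 4) (Fin 9) (ZMod 2))
    (hH : H = Matrix.of
      ![![1,1,1,0,0,0,1,1,1],
        ![0,0,0,1,1,1,1,1,1],
        ![1,0,1,1,0,1,1,0,1],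
        ![0,1,1,0,1,1,0,1,1]])
    (C : Set (Fin 9 → ZMod 2)) (hC : ∀ x, x ∈ C ↔ H.mulVec x = 0) :
    (∀ v : Fin 9 → ZMod 2, ∃ c ∈ C, hammingDist v c ≤ 2) ∧
    (∃ v : Fin 9 → ZMod 2, ∀ c ∈ C, 2 ≤ hammingDist v c) ∧
    sSup {d : ℕ | ∃ v : Fin 9 → ZMod 2,
      d = sInf {e : ℕ | ∃ c ∈ C, e = hammingDist v c}} = 2 ∧
    (∀ y : Fin 4 → ZMod 2, ∃ s : Finset (Fin 9),
      s.card ≤ 2 ∧ y = ∑ j ∈ s, (fun i => H i j)) ∧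
    (∃ y : Fin 4 → ZMod 2, y ≠ 0 ∧ ∀ j : Fin 9, y ≠ fun i => H i j) := by
  subst hH
  have p1 : ∀ v : Fin 9 → ZMod 2, ∃ c ∈ C, hammingDist v c ≤ 2 := by
    intro v
    obtain ⟨c, hc, hd⟩ := stmt12_aux1 v
    exact ⟨c, (hC c).mpr hc, hd⟩
  have p2 : ∃ v : Fin 9 → ZMod 2, ∀ c ∈ C, 2 ≤ hammingDist v c := by
    obtain ⟨v, hv⟩ := stmt12_aux2
    exact ⟨v, fun c hc => hv c ((hC c).mp hc)⟩
  refine ⟨p1, p2, ?_, stmt12_aux4, stmt12_aux5⟩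
  -- covering radius part
  have h0C : (0 : Fin 9 → ZMod 2) ∈ C := (hC 0).mpr (Matrix.mulVec_zero _)
  have hub : ∀ d ∈ {d : ℕ | ∃ v : Fin 9 → ZMod 2,
      d = sInf {e : ℕ | ∃ c ∈ C, e = hammingDist v c}}, d ≤ 2 := by
    rintro d ⟨v, rfl⟩
    obtain ⟨c, hc, hd⟩ := p1 v
    exact le_trans (Nat.sInf_le ⟨c, hc, rfl⟩) hd
  have hmem : (2 : ℕ) ∈ {d : ℕ | ∃ v : Fin 9 → ZMod 2,
      d = sInf {e : ℕ | ∃ c ∈ C, e = hammingDist v c}} := by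
    obtain ⟨v, hv⟩ := p2
    refine ⟨v, ?_⟩
    have hle : sInf {e : ℕ | ∃ c ∈ C, e = hammingDist v c} ≤ 2 := by
      obtain ⟨c, hc, hd⟩ := p1 v
      exact le_trans (Nat.sInf_le ⟨c, hc, rfl⟩) hd
    have hge : 2 ≤ sInf {e : ℕ | ∃ c ∈ C, e = hammingDist v c} := by
      refine le_csInf ⟨hammingDist v 0, 0, h0C, rfl⟩ ?_
      rintro e ⟨c, hc, rfl⟩
      exact hv c hc
    omega
  exact le_antisymm (csSup_le ⟨2, hmem⟩ hub) (le_csSup ⟨2, hub⟩ hmem)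
end

section
/- Let n be an odd prime such that 2 is a primitive root modulo n (the order of the unit 2 in (ZMod n)ˣ equals n − 1). Then there is a ring isomorphism (ZMod 2)[X] ⧸ (ideal generated by X^n − 1) ≃ (ZMod 2) × GaloisField 2 (n − 1). -/
open Polynomial

lemma key_iff (n : ℕ) [NeZero n] (d : ℕ) : (2 : ZMod n) ^ d = 1 ↔ n ∣ 2 ^ d - 1 := by
  have h1 : (1:ℕ) ≤ 2 ^ d := Nat.one_le_two_pow
  rw [← ZMod.natCast_eq_zero_iff, Nat.cast_sub h1]
  push_cast
  rw [sub_eq_zero, eq_comm]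

lemma irr_cyc (n : ℕ) (hn : n.Prime) (hodd : Odd n)
    (hprim : orderOf ((2 : ZMod n)) = n - 1) :
    Irreducible (cyclotomic n (ZMod 2)) := by
  haveI : Fact n.Prime := ⟨hn⟩
  haveI : NeZero n := ⟨hn.ne_zero⟩
  set K := GaloisField 2 (n - 1) with hK
  have hn1 : n - 1 ≠ 0 := by have := hn.two_le; omega
  haveI : Fintype K := Fintype.ofFinite K
  have hcardK : Nat.card K = 2 ^ (n - 1) := GaloisField.card 2 (n-1) hn1
  have hcardU : Nat.card Kˣ = 2 ^ (n - 1) - 1 := by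
    rw [Nat.card_units, hcardK]
  have hdvdU : n ∣ Nat.card Kˣ := by
    rw [hcardU, ← key_iff n (n-1)]
    rw [← hprim]; exact pow_orderOf_eq_one _
  -- find element of order n
  obtain ⟨g, hg⟩ := IsCyclic.exists_ofOrder_eq_natCard (α := Kˣ)
  have hgne : orderOf g ≠ 0 := by rw [hg]; exact Nat.card_pos.ne'
  have hdvdg : n ∣ orderOf g := by rw [hg]; exact hdvdU
  set ζu := g ^ (orderOf g / n) with hζu
  have hordu : orderOf ζu = n := orderOf_pow_orderOf_div hgne hdvdg
  set ζ : K := (ζu : K) with hζdef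
  have hordζ : orderOf ζ = n := by rw [hζdef, orderOf_units, hordu]
  have hζprim : IsPrimitiveRoot ζ n := by
    have := IsPrimitiveRoot.orderOf ζ
    rwa [hordζ] at this
  have hint : IsIntegral (ZMod 2) ζ := .of_finite _ _
  set q := minpoly (ZMod 2) ζ with hq
  have hdvd : q ∣ cyclotomic n (ZMod 2) := by
    apply minpoly.dvd
    rw [aeval_def, ← eval_map, map_cyclotomic]
    exact hζprim.isRoot_cyclotomic hn.pos
  have hdegcyc : (cyclotomic n (ZMod 2)).natDegree = n - 1 := by
    rw [natDegree_cyclotomic, Nat.totient_prime hn]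
  -- the intermediate field
  set F := IntermediateField.adjoin (ZMod 2) {ζ} with hF
  haveI : FiniteDimensional (ZMod 2) F := IntermediateField.adjoin.finiteDimensional hint
  haveI : Finite F := Module.finite_of_finite (ZMod 2)
  haveI : Fintype F := Fintype.ofFinite F
  have hfr : Module.finrank (ZMod 2) F = q.natDegree := IntermediateField.adjoin.finrank hint
  have hcardF : Nat.card F = 2 ^ q.natDegree := by
    rw [Nat.card_eq_fintype_card, Module.card_eq_pow_finrank (K := ZMod 2) (V := F), hfr, ZMod.card]
  have hζF : ζ ∈ F := IntermediateField.mem_adjoin_simple_self _ _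
  set ζ' : F := ⟨ζ, hζF⟩ with hζ'
  have hordζ' : orderOf ζ' = n := by
    have h2 : orderOf ζ = orderOf ζ' := orderOf_injective
      ((F.val : F →ₐ[ZMod 2] K) : F →* K) (fun a b hab => Subtype.ext hab) ζ'
    exact h2.symm.trans hordζ
  have hunit : IsUnit ζ' := by
    apply IsUnit.of_pow_eq_one (n := n) _ hn.ne_zero
    have := pow_orderOf_eq_one ζ'
    rwa [hordζ'] at this
  have hordu' : orderOf hunit.unit = n := by
    rw [← orderOf_units, hunit.unit_spec, hordζ']
  have hnd : n ∣ 2 ^ q.natDegree - 1 := by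
    have hcardU' : Nat.card (↥F)ˣ = 2 ^ q.natDegree - 1 := by
      rw [Nat.card_units, hcardF]
    rw [← hordu', ← hcardU']
    exact orderOf_dvd_natCard _
  have hd1 : (n - 1 : ℕ) ∣ q.natDegree := by
    rw [← hprim]
    exact orderOf_dvd_of_pow_eq_one ((key_iff n _).mpr hnd)
  have hdle : q.natDegree ≤ n - 1 := by
    rw [← hdegcyc]
    exact natDegree_le_of_dvd hdvd (cyclotomic_ne_zero n _)
  have hdpos : 0 < q.natDegree := minpoly.natDegree_pos hint
  have hdeq : q.natDegree = n - 1 := Nat.le_antisymm hdle (Nat.le_of_dvd hdpos hd1)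
  have : cyclotomic n (ZMod 2) = q := by
    apply eq_of_monic_of_dvd_of_natDegree_le (minpoly.monic hint) (cyclotomic.monic n _) hdvd
    rw [hdegcyc, hdeq]
  rw [this]
  exact minpoly.irreducible hint

/-- Let `n` be an odd prime such that `2` is a primitive root modulo `n`.
Then `(ZMod 2)[X] ⧸ (X^n − 1) ≃ (ZMod 2) × GaloisField 2 (n − 1)` as rings. -/
theorem stmt14 (n : ℕ) (hn : n.Prime) (hodd : Odd n)
    (hprim : orderOf ((2 : ZMod n)) = n - 1) :
    Nonempty ((Polynomial (ZMod 2) ⧸ Ideal.span {(Polynomial.X : Polynomial (ZMod 2)) ^ n - 1})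
      ≃+* (ZMod 2) × GaloisField 2 (n - 1)) := by
  haveI : Fact n.Prime := ⟨hn⟩
  have hirr := irr_cyc n hn hodd hprim
  haveI : Fact (Irreducible (cyclotomic n (ZMod 2))) := ⟨hirr⟩
  have hfac : (X : (ZMod 2)[X]) ^ n - 1 = (X - C 1) * cyclotomic n (ZMod 2) := by
    rw [map_one, ← cyclotomic_prime_mul_X_sub_one (ZMod 2) n, mul_comm]
  have hnotdvd : ¬ (X - C 1 : (ZMod 2)[X]) ∣ cyclotomic n (ZMod 2) := by
    rw [dvd_iff_isRoot]
    intro h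
    have h2 : eval 1 (cyclotomic n (ZMod 2)) = (n : ZMod 2) := eval_one_cyclotomic_prime
    rw [IsRoot, h2] at h
    rw [ZMod.natCast_eq_zero_iff] at h
    exact (Nat.not_even_iff_odd.mpr hodd) (even_iff_two_dvd.mpr h)
  have hcop : IsCoprime (X - C 1 : (ZMod 2)[X]) (cyclotomic n (ZMod 2)) :=
    ((irreducible_X_sub_C (1 : ZMod 2)).coprime_iff_not_dvd).mpr hnotdvd
  have hspan : Ideal.span {(X : (ZMod 2)[X]) ^ n - 1}
      = Ideal.span {(X - C 1 : (ZMod 2)[X])} * Ideal.span {cyclotomic n (ZMod 2)} := by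
    rw [Ideal.span_singleton_mul_span_singleton, hfac]
  have e1 := Ideal.quotEquivOfEq hspan
  have e2 := Ideal.quotientMulEquivQuotientProd _ _
    ((Ideal.isCoprime_span_singleton_iff _ _).mpr hcop)
  have e3 : ((ZMod 2)[X] ⧸ Ideal.span {(X - C 1 : (ZMod 2)[X])}) ≃+* ZMod 2 :=
    (quotientSpanXSubCAlgEquiv (1 : ZMod 2)).toRingEquiv
  -- quotient by cyclotomic is AdjoinRoot
  let A := AdjoinRoot (cyclotomic n (ZMod 2))
  have hn1 : n - 1 ≠ 0 := by have := hn.two_le; omega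
  haveI : FiniteDimensional (ZMod 2) A := PowerBasis.finite (AdjoinRoot.powerBasis hirr.ne_zero)
  haveI : Finite A := Module.finite_of_finite (ZMod 2)
  haveI : Fintype A := Fintype.ofFinite A
  have hcardA : Fintype.card A = 2 ^ (n - 1) := by
    rw [Module.card_eq_pow_finrank (K := ZMod 2) (V := A), ZMod.card,
      (AdjoinRoot.powerBasis hirr.ne_zero).finrank, AdjoinRoot.powerBasis_dim,
      natDegree_cyclotomic, Nat.totient_prime hn]
  have e4 : A ≃+* GaloisField 2 (n - 1) :=
    (GaloisField.algEquivGaloisFieldOfFintype 2 (n - 1) hcardA).toRingEquiv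
  exact ⟨(e1.trans e2).trans (RingEquiv.prodCongr e3 e4)⟩
end

section
/- There is a ring isomorphism (ZMod 2)[X] ⧸ (ideal generated by X^15 − 1) ≃ (ZMod 2) × GaloisField 2 4 × GaloisField 2 4 × GaloisField 2 4 × GaloisField 2 2; that is, the binary group algebra of the cyclic group of order 15 decomposes as a product of the finite fields of sizes 2, 16, 16, 16 and 4, corresponding to the five cyclotomic cosets of 2 modulo 15, which have sizes 1, 4, 4, 4 and 2. -/
open Polynomial

private lemma two_eq_zero' : (2 : Polynomial (ZMod 2)) = 0 := by
  have h : (2 : Polynomial (ZMod 2)) = C 1 + C 1 := by norm_num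
  rw [h, ← C_add, show (1 + 1 : ZMod 2) = 0 from rfl, C_0]

/-- A monic polynomial of `natDegree 2` is determined by its low coefficients. -/
private lemma quad_eq {q : Polynomial (ZMod 2)} (hq : q.Monic) (h : q.natDegree = 2) :
    q = X ^ 2 + C (q.coeff 1) * X + C (q.coeff 0) := by
  have h3 := q.as_sum_range' 3 (by omega)
  have h2 : q.coeff 2 = 1 := by
    have := hq.coeff_natDegree
    rwa [h] at this
  conv_lhs => rw [h3, Finset.sum_range_succ, Finset.sum_range_succ, Finset.sum_range_one, h2]
  simp only [← C_mul_X_pow_eq_monomial, C_1, pow_zero, mul_one, pow_one, one_mul]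
  ring

private lemma zmod2_cases (a : ZMod 2) : a = 0 ∨ a = 1 := by revert a; decide

private lemma xaddone_eq : (X + C 1 : Polynomial (ZMod 2)) = X - C 1 := by
  rw [sub_eq_add_neg, ← C_neg, show (-1 : ZMod 2) = 1 by decide]

private lemma not_dvd_of_rem {d t s r : Polynomial (ZMod 2)} (hrem : t - d * s = r)
    (hdeg : r.degree < d.degree) (hr : r ≠ 0) : ¬ d ∣ t := by
  intro hdvd
  have hdr : d ∣ r := by
    rw [← hrem]
    exact dvd_sub hdvd (dvd_mul_right d s)
  exact hr (Polynomial.eq_zero_of_dvd_of_degree_lt hdr hdeg)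

private lemma deg_p5 : (X ^ 2 + X + 1 : Polynomial (ZMod 2)).degree = 2 := by
  compute_degree!

/-- Irreducibility criterion for quartics over `ZMod 2`. -/
private lemma irred4 {p : Polynomial (ZMod 2)} (hm : p.Monic) (hd : p.natDegree = 4)
    (h0 : ¬ p.IsRoot 0) (h1 : ¬ p.IsRoot 1)
    (h5 : ¬ (X ^ 2 + X + 1 : Polynomial (ZMod 2)) ∣ p) : Irreducible p := by
  rw [hm.irreducible_iff_lt_natDegree_lt (by rintro rfl; simp at hd)]
  intro q hq hdq hdvd
  rw [hd, Finset.mem_Ioc] at hdq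
  have hlin : ∀ a : ZMod 2, ¬ (X - C a) ∣ p := by
    intro a
    rw [dvd_iff_isRoot]
    rcases zmod2_cases a with rfl | rfl
    · exact h0
    · exact h1
  have hX : ¬ (X : Polynomial (ZMod 2)) ∣ p := by
    have := hlin 0
    simpa using this
  have hX1 : ¬ (X - C 1 : Polynomial (ZMod 2)) ∣ p := hlin 1
  have hcase : q.natDegree = 1 ∨ q.natDegree = 2 := by omega
  rcases hcase with hq1 | hq2
  · have := hq.eq_X_add_C hq1
    rcases zmod2_cases (q.coeff 0) with hc | hc
    · rw [hc] at this
      apply hX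
      simpa [this] using hdvd
    · rw [hc, xaddone_eq] at this
      apply hX1
      rwa [this] at hdvd
  · have hqe := quad_eq hq hq2
    rcases zmod2_cases (q.coeff 1) with hb | hb <;>
      rcases zmod2_cases (q.coeff 0) with hc | hc <;>
      rw [hb, hc] at hqe <;>
      simp only [map_zero, map_one, zero_mul, one_mul, add_zero, zero_add] at hqe
    · -- q = X^2
      apply hX
      exact dvd_trans (dvd_pow_self X two_ne_zero) (hqe ▸ hdvd)
    · -- q = X^2 + 1 = (X - 1)^2
      apply hX1
      have : q = (X - C 1) * (X - C 1) := by
        rw [hqe]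
        rw [C_1]
        linear_combination (X : Polynomial (ZMod 2)) * two_eq_zero'
      exact dvd_trans (Dvd.intro _ rfl) (this ▸ hdvd)
    · -- q = X^2 + X = X * (X + 1)
      apply hX
      have : q = X * (X + 1) := by rw [hqe]; ring
      exact dvd_trans (dvd_mul_right X (X + 1)) (this ▸ hdvd)
    · -- q = X^2 + X + 1
      apply h5
      rwa [hqe] at hdvd

/-- The quotient by an irreducible monic polynomial of degree `m` over `ZMod 2` is
isomorphic to `GaloisField 2 m`. -/
private lemma quot_equiv_galois (f : Polynomial (ZMod 2)) (hmo : f.Monic)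
    (hirr : Irreducible f) (m : ℕ) (hdeg : f.natDegree = m) :
    Nonempty ((Polynomial (ZMod 2) ⧸ Ideal.span {f}) ≃+* GaloisField 2 m) := by
  haveI : Fact (Irreducible f) := ⟨hirr⟩
  have hcard : Nat.card (AdjoinRoot f) = 2 ^ m := by
    rw [Nat.card_congr (AdjoinRoot.powerBasisAux' hmo).equivFun.toEquiv]
    simp [Nat.card_eq_fintype_card, hdeg]
  exact ⟨(GaloisField.algEquivGaloisField 2 m hcard).toRingEquiv⟩

/-- CRT step. -/
private lemma step {a b : Polynomial (ZMod 2)} (h : IsCoprime a b) {A B : Type}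
    [Ring A] [Ring B]
    (ea : Nonempty ((Polynomial (ZMod 2) ⧸ Ideal.span {a}) ≃+* A))
    (eb : Nonempty ((Polynomial (ZMod 2) ⧸ Ideal.span {b}) ≃+* B)) :
    Nonempty ((Polynomial (ZMod 2) ⧸ Ideal.span {a * b}) ≃+* A × B) := by
  obtain ⟨ea⟩ := ea
  obtain ⟨eb⟩ := eb
  rw [← Ideal.span_singleton_mul_span_singleton]
  exact ⟨(Ideal.quotientMulEquivQuotientProd _ _
    ((Ideal.isCoprime_span_singleton_iff a b).mpr h)).trans (RingEquiv.prodCongr ea eb)⟩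

/-- The binary group algebra of the cyclic group of order `15`,
`(ZMod 2)[X] ⧸ (X^15 − 1)`, decomposes as a product of the finite fields of sizes
`2, 16, 16, 16, 4`, corresponding to the cyclotomic cosets of `2` modulo `15` of sizes
`1, 4, 4, 4, 2`. -/
theorem stmt15 :
    Nonempty ((Polynomial (ZMod 2) ⧸ Ideal.span {(Polynomial.X : Polynomial (ZMod 2)) ^ 15 - 1})
      ≃+* (ZMod 2) × GaloisField 2 4 × GaloisField 2 4 × GaloisField 2 4 × GaloisField 2 2) := by
  set p1 : Polynomial (ZMod 2) := X - C 1 with hp1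
  set p2 : Polynomial (ZMod 2) := X ^ 4 + X + 1 with hp2
  set p3 : Polynomial (ZMod 2) := X ^ 4 + X ^ 3 + 1 with hp3
  set p4 : Polynomial (ZMod 2) := X ^ 4 + X ^ 3 + X ^ 2 + X + 1 with hp4
  set p5 : Polynomial (ZMod 2) := X ^ 2 + X + 1 with hp5
  -- basic degrees and monicity
  have hm2 : p2.Monic := by rw [hp2]; monicity!
  have hm3 : p3.Monic := by rw [hp3]; monicity!
  have hm4 : p4.Monic := by rw [hp4]; monicity!
  have hm5 : p5.Monic := by rw [hp5]; monicity!
  have hd2 : p2.natDegree = 4 := by rw [hp2]; compute_degree!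
  have hd3 : p3.natDegree = 4 := by rw [hp3]; compute_degree!
  have hd4 : p4.natDegree = 4 := by rw [hp4]; compute_degree!
  have hd5 : p5.natDegree = 2 := by rw [hp5]; compute_degree!
  have hdeg2 : p2.degree = 4 := by rw [hp2]; compute_degree!
  have hdeg3 : p3.degree = 4 := by rw [hp3]; compute_degree!
  have hdeg4 : p4.degree = 4 := by rw [hp4]; compute_degree!
  have hdeg5 : p5.degree = 2 := by rw [hp5]; compute_degree!
  -- evaluations: no roots in ZMod 2
  have h20 : ¬ p2.IsRoot 0 := by rw [hp2]; simp only [Polynomial.IsRoot, eval_add, eval_pow, eval_X, eval_one]; decide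
  have h21 : ¬ p2.IsRoot 1 := by rw [hp2]; simp only [Polynomial.IsRoot, eval_add, eval_pow, eval_X, eval_one]; decide
  have h30 : ¬ p3.IsRoot 0 := by rw [hp3]; simp only [Polynomial.IsRoot, eval_add, eval_pow, eval_X, eval_one]; decide
  have h31 : ¬ p3.IsRoot 1 := by rw [hp3]; simp only [Polynomial.IsRoot, eval_add, eval_pow, eval_X, eval_one]; decide
  have h40 : ¬ p4.IsRoot 0 := by rw [hp4]; simp only [Polynomial.IsRoot, eval_add, eval_pow, eval_X, eval_one]; decide
  have h41 : ¬ p4.IsRoot 1 := by rw [hp4]; simp only [Polynomial.IsRoot, eval_add, eval_pow, eval_X, eval_one]; decide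
  have h50 : ¬ p5.IsRoot 0 := by rw [hp5]; simp only [Polynomial.IsRoot, eval_add, eval_pow, eval_X, eval_one]; decide
  have h51 : ¬ p5.IsRoot 1 := by rw [hp5]; simp only [Polynomial.IsRoot, eval_add, eval_pow, eval_X, eval_one]; decide
  -- p5 does not divide p2, p3, p4
  have h52 : ¬ p5 ∣ p2 := by
    apply not_dvd_of_rem (s := X ^ 2 + X) (r := 1)
    · rw [hp2, hp5]
      linear_combination (-X ^ 3 - X ^ 2 : Polynomial (ZMod 2)) * two_eq_zero'
    · rw [hdeg5, Polynomial.degree_one]; decide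
    · exact one_ne_zero
  have h53 : ¬ p5 ∣ p3 := by
    apply not_dvd_of_rem (s := X ^ 2 + 1) (r := X)
    · rw [hp3, hp5]
      linear_combination (-X ^ 2 - X : Polynomial (ZMod 2)) * two_eq_zero'
    · rw [hdeg5, Polynomial.degree_X]; decide
    · exact X_ne_zero
  have h54 : ¬ p5 ∣ p4 := by
    apply not_dvd_of_rem (s := X ^ 2) (r := X + 1)
    · rw [hp4, hp5]; ring
    · rw [hdeg5]
      exact lt_of_le_of_lt (show (X + 1 : Polynomial (ZMod 2)).degree ≤ 1 by compute_degree)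
        (by decide)
    · intro h
      have := congrArg (fun p => Polynomial.coeff p 1) h
      simp [Polynomial.coeff_one, Polynomial.coeff_X] at this
  -- irreducibility
  have hirr1 : Irreducible p1 := Polynomial.irreducible_X_sub_C 1
  have hirr2 : Irreducible p2 := irred4 hm2 hd2 h20 h21 (hp5 ▸ h52)
  have hirr3 : Irreducible p3 := irred4 hm3 hd3 h30 h31 (hp5 ▸ h53)
  have hirr4 : Irreducible p4 := irred4 hm4 hd4 h40 h41 (hp5 ▸ h54)
  have hirr5 : Irreducible p5 := by
    rw [hm5.irreducible_iff_lt_natDegree_lt (by rintro h; rw [h] at hd5; simp at hd5)]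
    intro q hq hdq hdvd
    rw [hd5, Finset.mem_Ioc] at hdq
    have hq1 : q.natDegree = 1 := by omega
    have := hq.eq_X_add_C hq1
    rcases zmod2_cases (q.coeff 0) with hc | hc <;> rw [hc] at this
    · apply h50
      rw [← dvd_iff_isRoot (a := 0)]
      simpa [this] using hdvd
    · apply h51
      rw [← dvd_iff_isRoot (a := 1)]
      rw [xaddone_eq] at this
      rwa [this] at hdvd
  -- pairwise non-divisibility among the quartics (same degree, distinct)
  have h23 : ¬ p2 ∣ p3 := by
    apply not_dvd_of_rem (d := p2) (t := p3) (s := 1) (r := X ^ 3 + X)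
    · rw [hp2, hp3]
      linear_combination (-X : Polynomial (ZMod 2)) * two_eq_zero'
    · rw [hdeg2]
      exact lt_of_le_of_lt
        (show (X ^ 3 + X : Polynomial (ZMod 2)).degree ≤ 3 by compute_degree) (by decide)
    · intro h
      have := congrArg (fun p => Polynomial.coeff p 3) h
      simp [Polynomial.coeff_one, Polynomial.coeff_X] at this
  have h24 : ¬ p2 ∣ p4 := by
    apply not_dvd_of_rem (d := p2) (t := p4) (s := 1) (r := X ^ 3 + X ^ 2)
    · rw [hp2, hp4]; ring
    · rw [hdeg2]
      exact lt_of_le_of_lt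
        (show (X ^ 3 + X ^ 2 : Polynomial (ZMod 2)).degree ≤ 3 by compute_degree) (by decide)
    · intro h
      have := congrArg (fun p => Polynomial.coeff p 3) h
      simp [Polynomial.coeff_one, Polynomial.coeff_X] at this
  have h34 : ¬ p3 ∣ p4 := by
    apply not_dvd_of_rem (d := p3) (t := p4) (s := 1) (r := X ^ 2 + X)
    · rw [hp3, hp4]; ring
    · rw [hdeg3]
      exact lt_of_le_of_lt
        (show (X ^ 2 + X : Polynomial (ZMod 2)).degree ≤ 2 by compute_degree) (by decide)
    · intro h
      have := congrArg (fun p => Polynomial.coeff p 2) h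
      simp [Polynomial.coeff_one, Polynomial.coeff_X] at this
  have h25 : ¬ p2 ∣ p5 := fun h =>
    h51 (by
      have := Polynomial.eq_zero_of_dvd_of_degree_lt h (by rw [hdeg2, hdeg5]; decide)
      rw [hp5] at this
      exact absurd this (by
        intro hh
        have := congrArg (fun p => Polynomial.coeff p 2) hh
        simp [Polynomial.coeff_one, Polynomial.coeff_X] at this))
  have h35 : ¬ p3 ∣ p5 := fun h =>
    h51 (by
      have := Polynomial.eq_zero_of_dvd_of_degree_lt h (by rw [hdeg3, hdeg5]; decide)
      rw [hp5] at this
      exact absurd this (by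
        intro hh
        have := congrArg (fun p => Polynomial.coeff p 2) hh
        simp [Polynomial.coeff_one, Polynomial.coeff_X] at this))
  have h45 : ¬ p4 ∣ p5 := fun h =>
    h51 (by
      have := Polynomial.eq_zero_of_dvd_of_degree_lt h (by rw [hdeg4, hdeg5]; decide)
      rw [hp5] at this
      exact absurd this (by
        intro hh
        have := congrArg (fun p => Polynomial.coeff p 2) hh
        simp [Polynomial.coeff_one, Polynomial.coeff_X] at this))
  -- p1 does not divide the others (they have no root 1)
  have h12 : ¬ p1 ∣ p2 := by rw [hp1, dvd_iff_isRoot]; exact h21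
  have h13 : ¬ p1 ∣ p3 := by rw [hp1, dvd_iff_isRoot]; exact h31
  have h14 : ¬ p1 ∣ p4 := by rw [hp1, dvd_iff_isRoot]; exact h41
  have h15 : ¬ p1 ∣ p5 := by rw [hp1, dvd_iff_isRoot]; exact h51
  -- coprimality
  have c12 : IsCoprime p1 p2 := hirr1.coprime_iff_not_dvd.mpr h12
  have c13 : IsCoprime p1 p3 := hirr1.coprime_iff_not_dvd.mpr h13
  have c14 : IsCoprime p1 p4 := hirr1.coprime_iff_not_dvd.mpr h14
  have c15 : IsCoprime p1 p5 := hirr1.coprime_iff_not_dvd.mpr h15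
  have c23 : IsCoprime p2 p3 := hirr2.coprime_iff_not_dvd.mpr h23
  have c24 : IsCoprime p2 p4 := hirr2.coprime_iff_not_dvd.mpr h24
  have c25 : IsCoprime p2 p5 := hirr2.coprime_iff_not_dvd.mpr h25
  have c34 : IsCoprime p3 p4 := hirr3.coprime_iff_not_dvd.mpr h34
  have c35 : IsCoprime p3 p5 := hirr3.coprime_iff_not_dvd.mpr h35
  have c45 : IsCoprime p4 p5 := hirr4.coprime_iff_not_dvd.mpr h45
  -- factorization
  have hfact : (X : Polynomial (ZMod 2)) ^ 15 - 1 = p1 * (p2 * (p3 * (p4 * p5))) := by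
    rw [hp1, hp2, hp3, hp4, hp5, C_1]
    linear_combination (-X ^ 14 - X ^ 13 - X ^ 12 - 2 * X ^ 11 - 2 * X ^ 10 - X ^ 9 + X ^ 6
      + 2 * X ^ 5 + 2 * X ^ 4 + X ^ 3 + X ^ 2 + X : Polynomial (ZMod 2)) * two_eq_zero'
  rw [hfact]
  -- the field equivalences
  have e1 : Nonempty ((Polynomial (ZMod 2) ⧸ Ideal.span {p1}) ≃+* ZMod 2) := by
    rw [hp1]
    exact ⟨(Polynomial.quotientSpanXSubCAlgEquiv (1 : ZMod 2)).toRingEquiv⟩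
  have e2 := quot_equiv_galois p2 hm2 hirr2 4 hd2
  have e3 := quot_equiv_galois p3 hm3 hirr3 4 hd3
  have e4 := quot_equiv_galois p4 hm4 hirr4 4 hd4
  have e5 := quot_equiv_galois p5 hm5 hirr5 2 hd5
  exact step (c12.mul_right (c13.mul_right (c14.mul_right c15))) e1
    (step (c23.mul_right (c24.mul_right c25)) e2
      (step (c34.mul_right c35) e3
        (step c45 e4 e5)))
end

section
/- Let H be the abelian group (Multiplicative (ZMod 3 × ZMod 3)), the direct product of two cyclic groups of order 3. Then there is a ring isomorphism MonoidAlgebra (ZMod 2) H ≃ (ZMod 2) × (Fin 4 → GaloisField 2 2); that is, the binary group algebra of H decomposes as a product of one copy of the field with 2 elements and four copies of the field with 4 elements, corresponding to the five conjugacy classes of H under squaring, which have sizes 1, 2, 2, 2 and 2. -/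
/-!
The nine characters `g ↦ ω ^ ⟨v, g⟩` of `C₃ × C₃` (`ω` a primitive cube root of unity in `𝔽₄`)
are permuted by the Frobenius `x ↦ x²`, which sends `v` to `-v`; the orbits are `{0}` and four
pairs `{v, -v}`. Evaluating at one character per orbit gives an `𝔽₂`-algebra map
`𝔽₂[C₃ × C₃] → 𝔽₂ × 𝔽₄⁴`. For `k` spanning the kernel of `v`, the element `1 + k + k²` maps to
`(1, e_v)`, `e_v` the unit vector of the factor of `v`, because `1 + z + z²` vanishes at the
nontrivial cube roots of unity and equals `3 = 1` at `z = 1`. These elements and the images of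
group elements generate the whole target, and both sides have `2⁹` elements.
-/

open MonoidAlgebra

local notation "𝔽₄" => GaloisField 2 2

instance MonoidAlgebra.finite (R M : Type*) [Semiring R] [Finite R] [Finite M] :
    Finite (MonoidAlgebra R M) :=
  Finite.of_equiv _ (coeffEquiv.trans Finsupp.equivFunOnFinite).symm

theorem MonoidAlgebra.natCard_eq (R M : Type*) [Semiring R] [Finite M] :
    Nat.card (MonoidAlgebra R M) = Nat.card R ^ Nat.card M := by
  rw [Nat.card_congr (coeffEquiv.trans Finsupp.equivFunOnFinite), Nat.card_fun]

theorem one_add_add_sq_eq_zero_of_cube_eq_one {R : Type*} [CommRing R] [IsDomain R] {z : R}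
    (hz : z ^ 3 = 1) (hz1 : z ≠ 1) : 1 + z + z ^ 2 = 0 := by
  have : (z - 1) * (1 + z + z ^ 2) = 0 := by linear_combination hz
  exact (mul_eq_zero.mp this).resolve_left (sub_ne_zero.mpr hz1)

theorem IsPrimitiveRoot.pow_val_eq_one_iff {M : Type*} [CommMonoid M] {ω : M} {n : ℕ} [NeZero n]
    (hω : IsPrimitiveRoot ω n) (t : ZMod n) : ω ^ t.val = 1 ↔ t = 0 := by
  rw [hω.pow_eq_one_iff_dvd, ← ZMod.natCast_eq_zero_iff, ZMod.natCast_zmod_val]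

theorem pow_three_eq_one_of_natCard_eq_four {K : Type*} [Field K] (hK : Nat.card K = 4) {x : K}
    (hx : x ≠ 0) : x ^ 3 = 1 := by
  have : Finite K := Nat.finite_of_card_ne_zero (by omega)
  have : Fintype K := Fintype.ofFinite K
  rw [Nat.card_eq_fintype_card] at hK
  simpa [hK] using FiniteField.pow_card_sub_one_eq_one x hx

theorem exists_isPrimitiveRoot_three_of_natCard_eq_four {K : Type*} [Field K]
    (hK : Nat.card K = 4) : ∃ ω : K, IsPrimitiveRoot ω 3 := by
  have : Finite K := Nat.finite_of_card_ne_zero (by omega)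
  have : Fact (Nat.Prime 3) := ⟨Nat.prime_three⟩
  obtain ⟨u, hu⟩ := exists_prime_orderOf_dvd_card' (G := Kˣ) 3 (by rw [Nat.card_units, hK])
  exact ⟨u, IsPrimitiveRoot.coe_units_iff.mpr (hu ▸ IsPrimitiveRoot.orderOf u)⟩

theorem eq_zero_or_exists_pow_val_eq_of_natCard_eq_four {K : Type*} [Field K]
    (hK : Nat.card K = 4) {ω : K} (hω : IsPrimitiveRoot ω 3) (x : K) :
    x = 0 ∨ ∃ t : ZMod 3, ω ^ t.val = x := by
  refine or_iff_not_imp_left.mpr fun hx => ?_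
  obtain ⟨i, hi, rfl⟩ := hω.eq_pow_of_pow_eq_one (pow_three_eq_one_of_natCard_eq_four hK hx)
  exact ⟨i, by rw [ZMod.val_cast_of_lt hi]⟩

theorem natCard_galoisField_two_two : Nat.card 𝔽₄ = 4 :=
  GaloisField.card 2 2 two_ne_zero

def dotHom {R : Type*} [CommRing R] (v : R × R) : R × R →+ R :=
  AddMonoidHom.mk' (fun g => v.1 * g.1 + v.2 * g.2) fun a b => by
    simp only [Prod.fst_add, Prod.snd_add]; ring

theorem dotHom_apply {R : Type*} [CommRing R] (v g : R × R) :
    dotHom v g = v.1 * g.1 + v.2 * g.2 :=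
  rfl

/-- One vector from each pair `{v, -v}` of nonzero vectors of `𝔽₃²`. -/
def lineRep : Fin 4 → ZMod 3 × ZMod 3 := ![(1, 0), (0, 1), (1, 1), (1, 2)]

theorem exists_dotHom_lineRep_eq_zero_iff (i : Fin 4) :
    ∃ k : ZMod 3 × ZMod 3, ∀ j, dotHom (lineRep j) k = 0 ↔ j = i := by
  simp only [dotHom_apply]
  revert i
  decide

theorem dotHom_lineRep_surjective (i : Fin 4) : Function.Surjective (dotHom (lineRep i)) := by
  intro t
  simp only [dotHom_apply]
  revert i t
  decide

section FourierTransform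

variable {ω : 𝔽₄} (hω : IsPrimitiveRoot ω 3)

noncomputable def fourierHom : Multiplicative (ZMod 3 × ZMod 3) →* ZMod 2 × (Fin 4 → 𝔽₄) :=
  (1 : _ →* ZMod 2).prod <| MonoidHom.pi fun i =>
    ((AddChar.zmodChar 3 hω.pow_eq_one).compAddMonoidHom (dotHom (lineRep i))).toMonoidHom

noncomputable def fourierAlgHom :
    MonoidAlgebra (ZMod 2) (Multiplicative (ZMod 3 × ZMod 3)) →ₐ[ZMod 2] ZMod 2 × (Fin 4 → 𝔽₄) :=
  lift _ _ _ (fourierHom hω)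

theorem fourierAlgHom_of (g : Multiplicative (ZMod 3 × ZMod 3)) :
    fourierAlgHom hω (of _ _ g) = (1, fun i => ω ^ (dotHom (lineRep i) g.toAdd).val) := by
  rw [fourierAlgHom, lift_of]
  rfl

theorem exists_fourierAlgHom_eq_single_one (i : Fin 4) :
    ∃ x, fourierAlgHom hω x = (1, Pi.single i 1) := by
  obtain ⟨k, hk⟩ := exists_dotHom_lineRep_eq_zero_iff i
  set y := of (ZMod 2) _ (Multiplicative.ofAdd k)
  refine ⟨1 + y + y ^ 2, Prod.ext ?_ (funext fun j => ?_)⟩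
  · simp only [map_add, map_one, map_pow, y, fourierAlgHom_of, Prod.fst_add, Prod.fst_one,
      Prod.pow_fst]
    decide
  · simp only [map_add, map_one, map_pow, y, fourierAlgHom_of, Prod.snd_add, Prod.snd_one,
      Prod.pow_snd, Pi.add_apply, Pi.one_apply, Pi.pow_apply, toAdd_ofAdd, Pi.single_apply]
    split_ifs with hji
    · rw [(hk j).mpr hji, ZMod.val_zero, pow_zero]
      linear_combination (CharTwo.two_eq_zero : (2 : 𝔽₄) = 0)
    · refine one_add_add_sq_eq_zero_of_cube_eq_one ?_
        ((hω.pow_val_eq_one_iff _).not.mpr ((hk j).not.mpr hji))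
      rw [pow_right_comm, hω.pow_eq_one, one_pow]

theorem fourierAlgHom_surjective : Function.Surjective (fourierAlgHom hω) := by
  let S := (fourierAlgHom hω).range
  have hunit (i : Fin 4) : ((1 : ZMod 2), Pi.single i (1 : 𝔽₄)) ∈ S :=
    exists_fourierAlgHom_eq_single_one hω i
  have hfst : ((1 : ZMod 2), (0 : Fin 4 → 𝔽₄)) ∈ S := by
    convert mul_mem (hunit 0) (hunit 1) using 1
    ext j
    · rfl
    · simp only [Prod.snd_mul, Pi.mul_apply, Pi.zero_apply, Pi.single_apply]
      split_ifs <;> simp_all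
  have hsnd (i : Fin 4) (x : 𝔽₄) : ((0 : ZMod 2), Pi.single i x) ∈ S := by
    obtain rfl | ⟨t, rfl⟩ :=
      eq_zero_or_exists_pow_val_eq_of_natCard_eq_four natCard_galoisField_two_two hω x
    · rw [Pi.single_zero]
      exact zero_mem S
    obtain ⟨g, hg⟩ := dotHom_lineRep_surjective i t
    convert mul_mem (sub_mem (hunit i) hfst)
      (⟨_, fourierAlgHom_of hω (Multiplicative.ofAdd g)⟩ : _ ∈ S) using 1
    ext j
    · simp
    · by_cases hji : j = i
      · subst hji
        simp [hg]
      · simp [hji]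
  rintro ⟨c, v⟩
  have hcv : (c, v) = c • ((1 : ZMod 2), (0 : Fin 4 → 𝔽₄)) +
      ∑ i, ((0 : ZMod 2), Pi.single i (v i)) := by
    ext <;> simp [Prod.fst_sum, Prod.snd_sum, Finset.univ_sum_single]
  exact (fourierAlgHom hω).mem_range.mp
    (hcv ▸ add_mem (S.smul_mem hfst c) (sum_mem fun i _ => hsnd i (v i)))

end FourierTransform

/-- The binary group algebra of `H = C₃ × C₃` decomposes as a product of
one copy of the field with `2` elements and four copies of the field with `4` elements. -/
theorem stmt16 :
    Nonempty (MonoidAlgebra (ZMod 2) (Multiplicative (ZMod 3 × ZMod 3))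
      ≃+* (ZMod 2) × (Fin 4 → GaloisField 2 2)) := by
  obtain ⟨ω, hω⟩ := exists_isPrimitiveRoot_three_of_natCard_eq_four natCard_galoisField_two_two
  have hcard : Nat.card (MonoidAlgebra (ZMod 2) (Multiplicative (ZMod 3 × ZMod 3))) =
      Nat.card (ZMod 2 × (Fin 4 → 𝔽₄)) := by
    simp [MonoidAlgebra.natCard_eq, Nat.card_fun, natCard_galoisField_two_two]
  exact ⟨.ofBijective (fourierAlgHom hω)
    ((Nat.bijective_iff_surjective_and_card _).mpr ⟨fourierAlgHom_surjective hω, hcard⟩)⟩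
end

section
/- Let F be a finite field with q elements, let G be a finite group of order n, let A = MonoidAlgebra F G, and let M be a left ideal of A such that every m ∈ M satisfies ∑_{g ∈ G} m g = 0 (the coefficients of every element of M sum to zero). Then for every k ∈ A there exists k' ∈ A with wt(k') ≤ ⌊n(q−1)/q⌋ such that k' * m = k * m for all m ∈ M. -/
/-!
Let `J = ∑ g, g` be the all-ones element. Its left product with any `m` has every coefficient
equal to `∑ g, m g`, so `J` annihilates `M` and `k' = k - c • J` acts on `M` like `k` for every
`c ∈ F`. The coefficients of `k'` vanish exactly where `k` takes the value `c`, and by pigeonhole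
some value `c` is taken at least `n / q` times.
-/

open Finset

theorem Fintype.exists_card_filter_ne_le {α β : Type*} [Fintype α] [Fintype β] [Nonempty β]
    [DecidableEq β] (f : α → β) :
    ∃ c, #{a | f a ≠ c} ≤ card α * (card β - 1) / card β := by
  obtain ⟨c, hc⟩ := Fintype.exists_le_card_fiber_of_nsmul_le_card f
    (b := (card α / card β : ℚ)) (by rw [nsmul_eq_mul, mul_div_cancel₀ _ (by simp)])
  have hfiber : card α ≤ card β * #{a | f a = c} := by
    rw [div_le_iff₀' (by exact_mod_cast Fintype.card_pos)] at hc
    exact_mod_cast hc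
  have hsplit := card_filter_add_card_filter_not (s := univ) (fun a => f a = c)
  rw [card_univ] at hsplit
  obtain ⟨q, hq⟩ : ∃ q, card β = q + 1 := Nat.exists_eq_succ_of_ne_zero Fintype.card_ne_zero
  rw [hq] at hfiber
  refine ⟨c, ?_⟩
  rw [Nat.le_div_iff_mul_le Fintype.card_pos, hq, Nat.add_sub_cancel]
  simp only [ne_eq]
  nlinarith

namespace MonoidAlgebra

noncomputable def allOnes (R G : Type*) [Semiring R] [Fintype G] : MonoidAlgebra R G :=
  ∑ g : G, single g 1

variable {R G : Type*} [Fintype G]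

@[simp]
lemma coeff_allOnes [Semiring R] (g : G) : (allOnes R G).coeff g = 1 := by
  classical
  simp [allOnes, coeff_sum, Finsupp.finsetSum_apply]

lemma coeff_allOnes_mul [Semiring R] [Group G] (x : MonoidAlgebra R G) (h : G) :
    (allOnes R G * x).coeff h = ∑ g, x.coeff g := by
  simp only [allOnes, sum_mul, coeff_sum, Finsupp.finsetSum_apply, coeff_single_mul_apply,
    one_mul]
  exact Fintype.sum_equiv ((Equiv.inv G).trans (Equiv.mulRight h)) _ _ fun _ => rfl

lemma allOnes_mul_eq_zero [Semiring R] [Group G] {x : MonoidAlgebra R G}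
    (hx : ∑ g, x.coeff g = 0) : allOnes R G * x = 0 := by
  ext h
  rw [coeff_allOnes_mul, hx]
  rfl

lemma support_coeff_sub_smul_allOnes [Ring R] [DecidableEq R] (x : MonoidAlgebra R G) (c : R) :
    (x - c • allOnes R G).coeff.support = ({g | x.coeff g ≠ c} : Finset G) := by
  ext g
  simp [coeff_sub, sub_eq_zero]

end MonoidAlgebra

/-- Let `F` be a finite field with `q` elements, `G` a finite group of
order `n`, `A = MonoidAlgebra F G`, and `M` a left ideal of `A` all of whose elements have
coefficients summing to zero. Then every `k ∈ A` can be replaced by some `k'` of weight at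
most `⌊n(q−1)/q⌋` acting identically on `M`. -/
theorem stmt18 {F : Type} [Field F] [Fintype F] {G : Type} [Group G] [Fintype G]
    (M : Submodule (MonoidAlgebra F G) (MonoidAlgebra F G))
    (hM : ∀ m ∈ M, ∑ g : G, (m : MonoidAlgebra F G).coeff g = 0) :
    ∀ k : MonoidAlgebra F G, ∃ k' : MonoidAlgebra F G,
      (k' : MonoidAlgebra F G).coeff.support.card ≤
        Fintype.card G * (Fintype.card F - 1) / Fintype.card F ∧
      ∀ m ∈ M, k' * m = k * m := by
  classical
  intro k
  obtain ⟨c, hc⟩ := Fintype.exists_card_filter_ne_le k.coeff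
  refine ⟨k - c • MonoidAlgebra.allOnes F G, ?_, fun m hm => ?_⟩
  · rwa [MonoidAlgebra.support_coeff_sub_smul_allOnes]
  · rw [sub_mul, smul_mul_assoc, MonoidAlgebra.allOnes_mul_eq_zero (hM m hm), smul_zero,
      sub_zero]
end
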